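/- For d-tuples X, Y of bounded operators on H, (1/2)·max{w_e(X+Y), w_e(X−Y)} ≤ w_e(M) ≤ (1/2)(w_e(X+Y) + w_e(X−Y)), where M is the d-tuple of off-diagonal block operators [[0, X_k],[Y_k, 0]] on H ⊕ H. -/

import Mathlib

noncomputable def jnorm {H : Type*} [NormedAddCommGroup H] [InnerProductSpace ℂ H]
    {d : ℕ} (T : Fin d → H →L[ℂ] H) : ℝ :=
  sSup {r | ∃ x : H, ‖x‖ = 1 ∧ r = Real.sqrt (∑ k, ‖T k x‖ ^ 2)}

noncomputable def we {H : Type*} [NormedAddCommGroup H] [InnerProductSpace ℂ H]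
    {d : ℕ} (T : Fin d → H →L[ℂ] H) : ℝ :=
  sSup {r | ∃ x : H, ‖x‖ = 1 ∧ r = Real.sqrt (∑ k, ‖(inner ℂ (T k x) x : ℂ)‖ ^ 2)}

noncomputable def blk {H : Type*} [NormedAddCommGroup H] [InnerProductSpace ℂ H]
    (A B C D : H →L[ℂ] H) : WithLp 2 (H × H) →L[ℂ] WithLp 2 (H × H) :=
  (WithLp.prodContinuousLinearEquiv 2 ℂ H H).symm.toContinuousLinearMap.comp
    (((A.comp (ContinuousLinearMap.fst ℂ H H) + B.comp (ContinuousLinearMap.snd ℂ H H)).prod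
      (C.comp (ContinuousLinearMap.fst ℂ H H) + D.comp (ContinuousLinearMap.snd ℂ H H))).comp
      (WithLp.prodContinuousLinearEquiv 2 ℂ H H).toContinuousLinearMap)

section aux
variable {H : Type*} [NormedAddCommGroup H] [InnerProductSpace ℂ H] {d : ℕ}

def ev {d : ℕ} (f : Fin d → ℂ) : EuclideanSpace ℂ (Fin d) := WithLp.toLp 2 f

lemma ev_norm (f : Fin d → ℂ) : ‖ev f‖ = Real.sqrt (∑ k, ‖f k‖ ^ 2) := by
  rw [EuclideanSpace.norm_eq]; rfl

lemma we_bddAbove (T : Fin d → H →L[ℂ] H) :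
    BddAbove {r | ∃ x : H, ‖x‖ = 1 ∧ r = Real.sqrt (∑ k, ‖(inner ℂ (T k x) x : ℂ)‖ ^ 2)} := by
  refine ⟨Real.sqrt (∑ k, ‖T k‖ ^ 2), ?_⟩
  rintro r ⟨x, hx, rfl⟩
  apply Real.sqrt_le_sqrt
  apply Finset.sum_le_sum
  intro k _
  refine pow_le_pow_left₀ (norm_nonneg _) ?_ 2
  calc ‖(inner ℂ (T k x) x : ℂ)‖ ≤ ‖T k x‖ * ‖x‖ := norm_inner_le_norm _ _
    _ ≤ (‖T k‖ * ‖x‖) * ‖x‖ := by gcongr; exact (T k).le_opNorm x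
    _ = ‖T k‖ := by rw [hx]; ring

lemma we_nonneg (T : Fin d → H →L[ℂ] H) : 0 ≤ we T :=
  Real.sSup_nonneg (by rintro r ⟨x, hx, rfl⟩; exact Real.sqrt_nonneg _)

lemma val_le_we (T : Fin d → H →L[ℂ] H) {x : H} (hx : ‖x‖ = 1) :
    Real.sqrt (∑ k, ‖(inner ℂ (T k x) x : ℂ)‖ ^ 2) ≤ we T :=
  le_csSup (we_bddAbove T) ⟨x, hx, rfl⟩

lemma avalue' (A : Fin d → H →L[ℂ] H) (a : H) :
    ‖ev (fun k => (inner ℂ (A k a) a : ℂ))‖ ≤ ‖a‖ ^ 2 * we A := by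
  rcases eq_or_ne a 0 with rfl | h
  · simp [ev_norm]
  · set c : ℂ := (‖a‖ : ℂ) with hc
    have hc0 : c ≠ 0 := by
      simpa [hc] using norm_ne_zero_iff.mpr h
    set b : H := c⁻¹ • a with hb
    have hbn : ‖b‖ = 1 := by
      rw [hb, norm_smul, norm_inv, hc, Complex.norm_real, Real.norm_eq_abs,
        abs_of_nonneg (norm_nonneg a), inv_mul_cancel₀ (norm_ne_zero_iff.mpr h)]
    have hab : a = c • b := by rw [hb, smul_smul, mul_inv_cancel₀ hc0, one_smul]
    have key : (fun k => (inner ℂ (A k a) a : ℂ)) = fun k => (c * c) * inner ℂ (A k b) b := by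
      funext k
      conv_lhs => rw [hab]
      rw [map_smul, inner_smul_left, inner_smul_right, hc, Complex.conj_ofReal]
      ring
    have hev : ev (fun k => (inner ℂ (A k a) a : ℂ))
        = (c * c) • ev (fun k => (inner ℂ (A k b) b : ℂ)) := by
      rw [key]; rfl
    rw [hev, norm_smul]
    have hcc : ‖c * c‖ = ‖a‖ ^ 2 := by
      rw [norm_mul, hc, Complex.norm_real, Real.norm_eq_abs, abs_of_nonneg (norm_nonneg a)]; ring
    rw [hcc]
    have := val_le_we A hbn
    rw [← ev_norm] at this
    exact mul_le_mul_of_nonneg_left this (sq_nonneg _)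

lemma keyA (A : Fin d → H →L[ℂ] H) (x y : H) (h : ‖x‖ ^ 2 + ‖y‖ ^ 2 = 1) :
    ‖ev (fun k => (inner ℂ (A k y) x + inner ℂ (A k x) y : ℂ))‖ ≤ we A := by
  have h2 : (2 : ℂ) • ev (fun k => (inner ℂ (A k y) x + inner ℂ (A k x) y : ℂ))
      = ev (fun k => (inner ℂ (A k (x + y)) (x + y) : ℂ))
        - ev (fun k => (inner ℂ (A k (x - y)) (x - y) : ℂ)) := by
    ext k
    show (2 : ℂ) * (inner ℂ (A k y) x + inner ℂ (A k x) y)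
      = (inner ℂ (A k (x + y)) (x + y) : ℂ) - inner ℂ (A k (x - y)) (x - y)
    simp only [map_add, map_sub, inner_add_left, inner_add_right, inner_sub_left, inner_sub_right]
    ring
  have hpar : ‖x + y‖ ^ 2 + ‖x - y‖ ^ 2 = 2 := by
    have := parallelogram_law_with_norm ℂ x y
    simp only [pow_two] at h ⊢
    linarith
  have hnn := we_nonneg A
  have hle : ‖(2 : ℂ) • ev (fun k => (inner ℂ (A k y) x + inner ℂ (A k x) y : ℂ))‖ ≤ 2 * we A := by
    rw [h2]
    calc _ ≤ ‖ev (fun k => (inner ℂ (A k (x + y)) (x + y) : ℂ))‖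
          + ‖ev (fun k => (inner ℂ (A k (x - y)) (x - y) : ℂ))‖ := norm_sub_le _ _
      _ ≤ ‖x + y‖ ^ 2 * we A + ‖x - y‖ ^ 2 * we A := add_le_add (avalue' A _) (avalue' A _)
      _ = (‖x + y‖ ^ 2 + ‖x - y‖ ^ 2) * we A := by ring
      _ = 2 * we A := by rw [hpar]
  rw [norm_smul] at hle
  simp only [Complex.norm_ofNat] at hle
  linarith

lemma blk_inner (X Y : H →L[ℂ] H) (u : WithLp 2 (H × H)) :
    (inner ℂ ((blk 0 X Y 0) u) u : ℂ) = inner ℂ (X u.snd) u.fst + inner ℂ (Y u.fst) u.snd := by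
  have h1 : ((blk 0 X Y 0) u).fst = X u.snd := by simp [blk]
  have h2 : ((blk 0 X Y 0) u).snd = Y u.fst := by simp [blk]
  rw [WithLp.prod_inner_apply]
  simp only [WithLp.ofLp_fst, WithLp.ofLp_snd]
  rw [h1, h2]

end aux

theorem stmt17 {H : Type*} [NormedAddCommGroup H] [InnerProductSpace ℂ H] {d : ℕ} (X Y : Fin d → H →L[ℂ] H) :
    (1 / 2) * max (we (fun k => X k + Y k)) (we (fun k => X k - Y k))
      ≤ we (fun k => blk 0 (X k) (Y k) 0) ∧
    we (fun k => blk 0 (X k) (Y k) 0)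
      ≤ (1 / 2) * (we (fun k => X k + Y k) + we (fun k => X k - Y k)) := by
  have hMnn := we_nonneg (fun k => blk 0 (X k) (Y k) 0)
  have hpnn := we_nonneg (fun k => X k + Y k)
  have hmnn := we_nonneg (fun k => X k - Y k)
  set c : ℂ := (Real.sqrt 2 : ℂ)⁻¹ with hcdef
  have hsq2 : ((Real.sqrt 2 : ℝ) : ℂ) * ((Real.sqrt 2 : ℝ) : ℂ) = 2 := by
    rw [← Complex.ofReal_mul, Real.mul_self_sqrt (by norm_num)]
    norm_num
  have hcc : c * c = 1 / 2 := by
    rw [hcdef, ← mul_inv, hsq2, one_div]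
  have hconj : (starRingEnd ℂ) c = c := by
    rw [hcdef, map_inv₀, Complex.conj_ofReal]
  have hcn : ‖c‖ = (Real.sqrt 2)⁻¹ := by
    rw [hcdef, norm_inv, Complex.norm_real, Real.norm_eq_abs,
      abs_of_nonneg (Real.sqrt_nonneg 2)]
  have hcn2 : ‖c‖ ^ 2 = 1 / 2 := by
    rw [hcn, ← Real.sqrt_inv, Real.sq_sqrt (by norm_num), one_div]
  constructor
  · -- lower bound
    have low1 : we (fun k => X k + Y k) ≤ 2 * we (fun k => blk 0 (X k) (Y k) 0) := by
      apply Real.sSup_le _ (by linarith)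
      rintro r ⟨x, hx, rfl⟩
      show Real.sqrt (∑ k, ‖(inner ℂ ((X k + Y k) x) x : ℂ)‖ ^ 2)
        ≤ 2 * we (fun k => blk 0 (X k) (Y k) 0)
      set u : WithLp 2 (H × H) := (WithLp.equiv 2 (H × H)).symm (c • x, c • x) with hu
      have hufst : u.fst = c • x := rfl
      have husnd : u.snd = c • x := rfl
      have hun : ‖u‖ = 1 := by
        have h1 : ‖u‖ ^ 2 = 1 := by
          rw [WithLp.prod_norm_sq_eq_of_L2, hufst, husnd, norm_smul, mul_pow, hcn2, hx]
          ring
        nlinarith [norm_nonneg u]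
      have hval : ∀ k, (inner ℂ ((blk 0 (X k) (Y k) 0) u) u : ℂ)
          = (1 / 2 : ℂ) * inner ℂ ((X k + Y k) x) x := by
        intro k
        rw [blk_inner, hufst, husnd]
        simp only [map_smul, inner_smul_left, inner_smul_right, hconj,
          ContinuousLinearMap.add_apply, inner_add_left]
        linear_combination ((inner ℂ ((X k) x) x : ℂ) + inner ℂ ((Y k) x) x) * hcc
      have hsum : Real.sqrt (∑ k, ‖(inner ℂ ((blk 0 (X k) (Y k) 0) u) u : ℂ)‖ ^ 2)
          = (1 / 2) * Real.sqrt (∑ k, ‖(inner ℂ ((X k + Y k) x) x : ℂ)‖ ^ 2) := by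
        have : ∀ k, ‖(inner ℂ ((blk 0 (X k) (Y k) 0) u) u : ℂ)‖ ^ 2
            = (1 / 2) ^ 2 * ‖(inner ℂ ((X k + Y k) x) x : ℂ)‖ ^ 2 := by
          intro k
          rw [hval k, norm_mul]
          norm_num
          ring
        rw [Finset.sum_congr rfl (fun k _ => this k), ← Finset.mul_sum,
          Real.sqrt_mul (sq_nonneg _), Real.sqrt_sq (by norm_num)]
      have hmem : (1 / 2) * Real.sqrt (∑ k, ‖(inner ℂ ((X k + Y k) x) x : ℂ)‖ ^ 2)
          ≤ we (fun k => blk 0 (X k) (Y k) 0) := by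
        rw [← hsum]
        exact le_csSup (we_bddAbove _) ⟨u, hun, rfl⟩
      linarith
    have low2 : we (fun k => X k - Y k) ≤ 2 * we (fun k => blk 0 (X k) (Y k) 0) := by
      apply Real.sSup_le _ (by linarith)
      rintro r ⟨x, hx, rfl⟩
      show Real.sqrt (∑ k, ‖(inner ℂ ((X k - Y k) x) x : ℂ)‖ ^ 2)
        ≤ 2 * we (fun k => blk 0 (X k) (Y k) 0)
      set u : WithLp 2 (H × H) := (WithLp.equiv 2 (H × H)).symm (c • x, (c * Complex.I) • x)
        with hu
      have hufst : u.fst = c • x := rfl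
      have husnd : u.snd = (c * Complex.I) • x := rfl
      have hun : ‖u‖ = 1 := by
        have h1 : ‖u‖ ^ 2 = 1 := by
          rw [WithLp.prod_norm_sq_eq_of_L2, hufst, husnd, norm_smul, norm_smul, mul_pow,
            mul_pow, norm_mul, Complex.norm_I, mul_one, hcn2, hx]
          ring
        nlinarith [norm_nonneg u]
      have hval : ∀ k, (inner ℂ ((blk 0 (X k) (Y k) 0) u) u : ℂ)
          = (-Complex.I / 2 : ℂ) * inner ℂ ((X k - Y k) x) x := by
        intro k
        rw [blk_inner, hufst, husnd]
        simp only [map_smul, inner_smul_left, inner_smul_right, hconj, map_mul, Complex.conj_I,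
          ContinuousLinearMap.sub_apply, inner_sub_left]
        linear_combination (-Complex.I * (inner ℂ ((X k) x) x : ℂ)
          + Complex.I * inner ℂ ((Y k) x) x) * hcc
      have hsum : Real.sqrt (∑ k, ‖(inner ℂ ((blk 0 (X k) (Y k) 0) u) u : ℂ)‖ ^ 2)
          = (1 / 2) * Real.sqrt (∑ k, ‖(inner ℂ ((X k - Y k) x) x : ℂ)‖ ^ 2) := by
        have : ∀ k, ‖(inner ℂ ((blk 0 (X k) (Y k) 0) u) u : ℂ)‖ ^ 2
            = (1 / 2) ^ 2 * ‖(inner ℂ ((X k - Y k) x) x : ℂ)‖ ^ 2 := by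
          intro k
          rw [hval k, norm_mul]
          have : ‖(-Complex.I / 2 : ℂ)‖ = 1 / 2 := by
            rw [norm_div]
            simp
          rw [this]
          ring
        rw [Finset.sum_congr rfl (fun k _ => this k), ← Finset.mul_sum,
          Real.sqrt_mul (sq_nonneg _), Real.sqrt_sq (by norm_num)]
      have hmem : (1 / 2) * Real.sqrt (∑ k, ‖(inner ℂ ((X k - Y k) x) x : ℂ)‖ ^ 2)
          ≤ we (fun k => blk 0 (X k) (Y k) 0) := by
        rw [← hsum]
        exact le_csSup (we_bddAbove _) ⟨u, hun, rfl⟩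
      linarith
    have := max_le low1 low2
    linarith
  · -- upper bound
    apply Real.sSup_le _ (by linarith)
    rintro r ⟨u, hu, rfl⟩
    have hxy : ‖u.fst‖ ^ 2 + ‖u.snd‖ ^ 2 = 1 := by
      rw [← WithLp.prod_norm_sq_eq_of_L2, hu]; norm_num
    set x := u.fst
    set y := u.snd
    set y' : H := Complex.I • y with hy'
    have hxy' : ‖x‖ ^ 2 + ‖y'‖ ^ 2 = 1 := by
      rw [hy', norm_smul, Complex.norm_I, one_mul]
      exact hxy
    have hdec : ev (fun k => (inner ℂ ((blk 0 (X k) (Y k) 0) u) u : ℂ))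
        = (1 / 2 : ℂ) • ev (fun k =>
              (inner ℂ ((X k + Y k) y) x + inner ℂ ((X k + Y k) x) y : ℂ))
          + (Complex.I / 2) • ev (fun k =>
              (inner ℂ ((X k - Y k) y') x + inner ℂ ((X k - Y k) x) y' : ℂ)) := by
      ext k
      show (inner ℂ ((blk 0 (X k) (Y k) 0) u) u : ℂ)
        = (1 / 2 : ℂ) * ((inner ℂ ((X k + Y k) y) x + inner ℂ ((X k + Y k) x) y : ℂ))
          + (Complex.I / 2) * ((inner ℂ ((X k - Y k) y') x + inner ℂ ((X k - Y k) x) y' : ℂ))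
      rw [blk_inner, hy']
      simp only [ContinuousLinearMap.add_apply, ContinuousLinearMap.sub_apply, map_smul,
        inner_smul_left, inner_smul_right, inner_add_left, inner_sub_left, Complex.conj_I]
      linear_combination ((inner ℂ (X k y) x : ℂ) - inner ℂ (Y k y) x - inner ℂ (X k x) y
        + inner ℂ (Y k x) y) / 2 * Complex.I_mul_I
    have hP : ‖ev (fun k => (inner ℂ ((X k + Y k) y) x + inner ℂ ((X k + Y k) x) y : ℂ))‖
        ≤ we (fun k => X k + Y k) := keyA (fun k => X k + Y k) x y hxy
    have hQ : ‖ev (fun k => (inner ℂ ((X k - Y k) y') x + inner ℂ ((X k - Y k) x) y' : ℂ))‖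
        ≤ we (fun k => X k - Y k) := keyA (fun k => X k - Y k) x y' hxy'
    have hhalf : ‖(1 / 2 : ℂ)‖ = 1 / 2 := by norm_num
    have hIhalf : ‖(Complex.I / 2 : ℂ)‖ = 1 / 2 := by
      rw [norm_div]; simp
    have hfin : ‖ev (fun k => (inner ℂ ((blk 0 (X k) (Y k) 0) u) u : ℂ))‖
        ≤ (1 / 2) * (we (fun k => X k + Y k) + we (fun k => X k - Y k)) := by
      rw [hdec]
      calc _ ≤ ‖(1 / 2 : ℂ) • ev (fun k =>
                (inner ℂ ((X k + Y k) y) x + inner ℂ ((X k + Y k) x) y : ℂ))‖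
            + ‖(Complex.I / 2) • ev (fun k =>
                (inner ℂ ((X k - Y k) y') x + inner ℂ ((X k - Y k) x) y' : ℂ))‖ := norm_add_le _ _
        _ = (1 / 2) * ‖ev (fun k =>
                (inner ℂ ((X k + Y k) y) x + inner ℂ ((X k + Y k) x) y : ℂ))‖
            + (1 / 2) * ‖ev (fun k =>
                (inner ℂ ((X k - Y k) y') x + inner ℂ ((X k - Y k) x) y' : ℂ))‖ := by
              rw [norm_smul, norm_smul, hhalf, hIhalf]
        _ ≤ (1 / 2) * we (fun k => X k + Y k) + (1 / 2) * we (fun k => X k - Y k) := by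
              gcongr
        _ = (1 / 2) * (we (fun k => X k + Y k) + we (fun k => X k - Y k)) := by ring
    show Real.sqrt (∑ k, ‖(inner ℂ ((blk 0 (X k) (Y k) 0) u) u : ℂ)‖ ^ 2)
      ≤ (1 / 2) * (we (fun k => X k + Y k) + we (fun k => X k - Y k))
    rw [← ev_norm]
    exact hfin
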